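/- arXiv:0903.4334 — 4 statements merged into one kernel-verified Lean document; each statement's English description precedes it below -/
import Mathlib

section
/- Any matrix B in Z^(2r×2r) with minimal polynomial p(X) = X² - X + 1 over Q is conjugate in GL(2r, Z) to the block-diagonal matrix diag(A, ..., A) with r blocks, where A = [[0, -1], [1, 1]]. -/
/-
`𝓞 ℚ(ζ₃) = ℤ[ω]` with `ω = -ζ₃`, a root of `X² - X + 1`, is a principal ideal domain. Since
`B² - B + 1 = 0`, letting `ω` act as `B` makes `ℤ^{2r}` a finitely generated `ℤ[ω]`-module, which
is torsion-free because every nonzero element of `ℤ[ω]` divides a nonzero integer. It is therefore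
free, of rank `r`, on some `b₁, …, b_r`; then `b₁, Bb₁, …, b_r, Bb_r` is a `ℤ`-basis of `ℤ^{2r}` on
which `B` acts by `b ↦ Bb`, `Bb ↦ B²b = Bb - b`, that is, by the block `[[0,-1],[1,1]]` on each
pair.
-/

open Polynomial NumberField Module

theorem Matrix.aeval_eq_zero_of_aeval_map {n R A : Type*} [Fintype n] [DecidableEq n] [CommRing R]
    [CommRing A] [Algebra R A] (hinj : Function.Injective (algebraMap R A)) (B : Matrix n n R)
    {p : R[X]} (h : aeval (B.map (algebraMap R A)) p = 0) : aeval B p = 0 :=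
  Matrix.map_injective hinj <|
    ((aeval_algHom_apply (Algebra.ofId R A).mapMatrix B p).symm.trans h).trans
      (Matrix.map_zero _ (map_zero _)).symm

theorem Matrix.exists_isUnit_det_inv_mul_mul_eq_toMatrix {n R : Type*} [Fintype n] [DecidableEq n]
    [CommRing R] (B : Matrix n n R) (v : Basis n R (n → R)) :
    ∃ P : Matrix n n R, IsUnit P.det ∧ P⁻¹ * B * P = LinearMap.toMatrix v v B.toLin' := by
  set e := Pi.basisFun R n
  have hdet : IsUnit (e.toMatrix v).det :=
    Matrix.isUnit_det_of_right_inverse (e.toMatrix_mul_toMatrix_flip v)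
  have hB : e.toMatrix v * LinearMap.toMatrix v v B.toLin' * v.toMatrix e = B := by
    rw [basis_toMatrix_mul_linearMap_toMatrix_mul_basis_toMatrix, LinearMap.toMatrix_eq_toMatrix',
      LinearMap.toMatrix'_toLin']
  refine ⟨e.toMatrix v, hdet, ?_⟩
  conv_lhs => rw [← hB]
  rw [Matrix.mul_assoc, Matrix.mul_assoc, v.toMatrix_mul_toMatrix_flip, Matrix.mul_one,
    ← Matrix.mul_assoc, Matrix.nonsing_inv_mul _ hdet, Matrix.one_mul]

theorem LinearMap.toMatrix_basis_reindex {R M ι κ : Type*} [CommRing R] [AddCommGroup M]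
    [Module R M] [Fintype ι] [DecidableEq ι] [Fintype κ] [DecidableEq κ] (v : Basis ι R M)
    (e : ι ≃ κ) (g : Module.End R M) :
    LinearMap.toMatrix (v.reindex e) (v.reindex e) g =
      Matrix.reindex e e (LinearMap.toMatrix v v g) := by
  ext i j
  simp [LinearMap.toMatrix_apply]

theorem Module.IsTorsionFree.of_isScalarTower_of_isIntegral {R S M : Type*} [CommRing R]
    [IsDomain R] [CommRing S] [IsDomain S] [Algebra R S] [Algebra.IsIntegral R S] [AddCommGroup M]
    [Module R M] [Module S M] [IsScalarTower R S M] [IsTorsionFree R M] : IsTorsionFree S M := by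
  refine .of_smul_eq_zero fun s m hsm => or_iff_not_imp_left.2 fun hs => ?_
  obtain ⟨c, hc, hc0⟩ := Submodule.exists_mem_ne_zero_of_ne_bot <|
    Ideal.comap_ne_bot_of_integral_mem hs (Ideal.mem_span_singleton_self s)
      (Algebra.IsIntegral.isIntegral (R := R) s)
  obtain ⟨t, ht⟩ := Ideal.mem_span_singleton'.1 hc
  have hcm : c • m = 0 := by rw [← algebraMap_smul S c m, ← ht, mul_smul, hsm, smul_zero]
  exact (smul_eq_zero.1 hcm).resolve_left hc0

namespace IsAdjoinRoot

variable {R S T : Type*} [CommRing R] [CommRing S] [Algebra R S] {f : R[X]}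
  (h : IsAdjoinRoot S f) [Ring T] [Algebra R T] (x : T) (hx : aeval x f = 0)

/-- A variant of `IsAdjoinRoot.liftHom` for a possibly noncommutative target. -/
noncomputable def liftAlgHom : S →ₐ[R] T :=
  (Ideal.Quotient.liftₐ _ (aeval x) fun p hp => by
    obtain ⟨q, rfl⟩ := h.mem_ker_map.1 hp
    simp [hx]).comp (Ideal.quotientKerAlgEquivOfSurjective h.map_surjective).symm.toAlgHom

theorem liftAlgHom_root : h.liftAlgHom x hx h.root = x := by
  rw [liftAlgHom, AlgHom.comp_apply, AlgEquiv.coe_toAlgHom, ← h.map_X,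
    Ideal.quotientKerAlgEquivOfSurjective_symm_apply, Ideal.Quotient.liftₐ_apply]
  exact (Ideal.Quotient.lift_mk _ _ _).trans (aeval_X x)

end IsAdjoinRoot

theorem LinearMap.toMatrix_eq_blockDiagonal_of_sq_eq {R M ι : Type*} [CommRing R] [AddCommGroup M]
    [Module R M] [Fintype ι] [DecidableEq ι] (v : Basis (Fin 2 × ι) R M) (g : Module.End R M)
    (hg : g ^ 2 = g - 1) (hv : ∀ l, v (1, l) = g (v (0, l))) :
    LinearMap.toMatrix v v g = Matrix.blockDiagonal fun _ => !![0, -1; 1, 1] := by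
  have hv' : ∀ l, g (v (1, l)) = v (1, l) - v (0, l) := fun l => by
    rw [hv, ← Module.End.mul_apply, ← sq, hg, LinearMap.sub_apply, Module.End.one_apply]
  ext ⟨i, k⟩ ⟨j, l⟩
  rw [LinearMap.toMatrix_apply]
  fin_cases i <;> fin_cases j <;> by_cases hkl : k = l <;>
    simp [← hv, hv', Matrix.blockDiagonal_apply, hkl, eq_comm]

namespace IsAdjoinRootMonic

variable {R S M : Type*} [CommRing R] [IsDomain R] [CommRing S] [IsDomain S]
  [IsPrincipalIdealRing S] [Algebra R S] [AddCommGroup M] [Module R M] [Module.Finite R M]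
  [IsTorsionFree R M]

theorem exists_basis_pow_apply {f : R[X]} (h : IsAdjoinRootMonic S f) (g : Module.End R M)
    (hg : aeval g f = 0) :
    ∃ (n : ℕ) (b : Fin n → M) (v : Basis (Fin f.natDegree × Fin n) R M),
      ∀ i l, v (i, l) = (g ^ (i : ℕ)) (b l) := by
  let _ : Module S M := Module.compHom M (h.liftAlgHom g hg : S →+* Module.End R M)
  have : IsScalarTower R S M := ⟨fun r s m => by
    change h.liftAlgHom g hg (r • s) m = r • h.liftAlgHom g hg s m
    rw [map_smul]; rfl⟩
  have := h.finite
  have := Module.Finite.of_restrictScalars_finite R S M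
  have : IsTorsionFree S M := Module.IsTorsionFree.of_isScalarTower_of_isIntegral (R := R)
  let b := (Free.chooseBasis S M).reindex (Fintype.equivFin _)
  refine ⟨_, b, h.basis.smulTower b, fun i l => ?_⟩
  rw [Basis.smulTower_apply, h.basis_apply]
  change h.liftAlgHom g hg (h.root ^ (i : ℕ)) (b l) = _
  rw [map_pow, h.liftAlgHom_root]

theorem exists_basis_toMatrix_eq_blockDiagonal (h : IsAdjoinRootMonic S (X ^ 2 - X + 1 : R[X]))
    (g : Module.End R M) (hg : aeval g (X ^ 2 - X + 1 : R[X]) = 0) :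
    ∃ (n : ℕ) (v : Basis (Fin 2 × Fin n) R M),
      LinearMap.toMatrix v v g = Matrix.blockDiagonal fun _ => !![0, -1; 1, 1] := by
  obtain ⟨n, b, v, hv⟩ := h.exists_basis_pow_apply g hg
  have hdeg : (X ^ 2 - X + 1 : R[X]).natDegree = 2 := by compute_degree!
  refine ⟨n, v.reindex ((finCongr hdeg).prodCongr (Equiv.refl _)),
    LinearMap.toMatrix_eq_blockDiagonal_of_sq_eq _ g ?_ fun l => ?_⟩
  · simp only [map_add, map_sub, map_pow, aeval_X, map_one] at hg
    rw [← sub_eq_zero, ← hg]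
    abel
  · simp [hv]

end IsAdjoinRootMonic

section
variable {K : Type*} [Field K] [CharZero K] {ζ : K}

theorem IsPrimitiveRoot.minpoly_neg_toInteger (hζ : IsPrimitiveRoot ζ 3) :
    minpoly ℤ (-hζ.toInteger) = X ^ 2 - X + 1 := by
  have hη : hζ.toInteger ^ 2 + hζ.toInteger + 1 = 0 := by
    simpa [cyclotomic_three] using hζ.toInteger_isPrimitiveRoot.isRoot_cyclotomic (by norm_num)
  have hmonic : (X ^ 2 - X + 1 : ℤ[X]).Monic := by monicity!
  have hroot : aeval (-hζ.toInteger) (X ^ 2 - X + 1 : ℤ[X]) = 0 := by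
    simp only [map_add, map_sub, map_pow, aeval_X, map_one]
    linear_combination hη
  have hirr : Irreducible (X ^ 2 - X + 1 : ℤ[X]) :=
    cyclotomic_six ℤ ▸ cyclotomic.irreducible (by norm_num)
  have hint : IsIntegral ℤ (-hζ.toInteger) := ⟨_, hmonic, hroot⟩
  have hdvd := minpoly.isIntegrallyClosed_dvd hint hroot
  exact eq_of_monic_of_associated (minpoly.monic hint) hmonic
    (associated_of_dvd_dvd hdvd ((minpoly.irreducible hint).dvd_symm hirr hdvd))

theorem IsPrimitiveRoot.adjoin_neg_toInteger {n : ℕ} [NeZero n] [IsCyclotomicExtension {n} ℚ K]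
    (hζ : IsPrimitiveRoot ζ n) : Algebra.adjoin ℤ {-hζ.toInteger} = ⊤ := by
  refine eq_top_iff.2 ?_
  rw [← hζ.integralPowerBasis.adjoin_gen_eq_top]
  refine Algebra.adjoin_le (Set.singleton_subset_iff.2 ?_)
  simpa using neg_mem (Algebra.self_mem_adjoin_singleton ℤ (-hζ.toInteger))

noncomputable def IsPrimitiveRoot.isAdjoinRootMonicNegToInteger [NumberField K]
    [IsCyclotomicExtension {3} ℚ K] (hζ : IsPrimitiveRoot ζ 3) :
    IsAdjoinRootMonic (𝓞 K) (X ^ 2 - X + 1 : ℤ[X]) :=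
  hζ.minpoly_neg_toInteger ▸ IsAdjoinRootMonic.mkOfAdjoinEqTop' hζ.adjoin_neg_toInteger

end

theorem stmt_0_general (r : ℕ) (B : Matrix (Fin (2 * r)) (Fin (2 * r)) ℤ)
    (h : minpoly ℚ (B.map ((↑) : ℤ → ℚ)) = X ^ 2 - X + 1) :
    ∃ P : Matrix (Fin (2 * r)) (Fin (2 * r)) ℤ, IsUnit P.det ∧
      P⁻¹ * B * P =
        (Matrix.reindex finProdFinEquiv finProdFinEquiv)
          (Matrix.blockDiagonal fun _ : Fin r => (!![0, -1; 1, 1] : Matrix (Fin 2) (Fin 2) ℤ)) := by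
  let K := CyclotomicField 3 ℚ
  have : IsCyclotomicExtension {3} ℚ K := CyclotomicField.isCyclotomicExtension 3 ℚ
  have := IsCyclotomicExtension.Rat.three_pid K
  have hB : aeval B (X ^ 2 - X + 1 : ℤ[X]) = 0 :=
    B.aeval_eq_zero_of_aeval_map (algebraMap ℤ ℚ).injective_int <| by
      simpa [h] using minpoly.aeval ℚ (B.map ((↑) : ℤ → ℚ))
  have hg : aeval (Matrix.toLin' B) (X ^ 2 - X + 1 : ℤ[X]) = 0 :=
    (aeval_algHom_apply Matrix.toLinAlgEquiv' B _).trans (by rw [hB, map_zero])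
  obtain ⟨n, v, hv⟩ := (IsCyclotomicExtension.zeta_spec 3 ℚ K).isAdjoinRootMonicNegToInteger
    |>.exists_basis_toMatrix_eq_blockDiagonal (Matrix.toLin' B) hg
  obtain rfl : n = r := by
    simpa using (Module.finrank_eq_card_basis v).symm.trans (Module.finrank_fin_fun ℤ)
  obtain ⟨P, hP, hconj⟩ := B.exists_isUnit_det_inv_mul_mul_eq_toMatrix (v.reindex finProdFinEquiv)
  exact ⟨P, hP, by rw [hconj, LinearMap.toMatrix_basis_reindex, hv]⟩

/-- Any integer `2r × 2r` matrix with minimal polynomial `X² - X + 1` over `ℚ` is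
conjugate in `GL(2r, ℤ)` to the block-diagonal matrix `diag(A, …, A)` with `r` blocks,
where `A = [[0,-1],[1,1]]`. -/
theorem stmt_0 (r : ℕ) (hr : 0 < r) (B : Matrix (Fin (2 * r)) (Fin (2 * r)) ℤ)
    (h : minpoly ℚ (B.map ((↑) : ℤ → ℚ)) = X ^ 2 - X + 1) :
    ∃ P : Matrix (Fin (2 * r)) (Fin (2 * r)) ℤ, IsUnit P.det ∧
      P⁻¹ * B * P =
        (Matrix.reindex finProdFinEquiv finProdFinEquiv)
          (Matrix.blockDiagonal fun _ : Fin r => (!![0, -1; 1, 1] : Matrix (Fin 2) (Fin 2) ℤ)) :=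
  stmt_0_general r B h
end

section
/- For n ≥ 3, the automorphism group S_{n+1} × {±1} of A_n contains no element φ with φ² - φ + 1 = 0 (as an automorphism of the rank-n lattice A_n ⊗ Q). -/
/-- For `n ≥ 3`, no element `(σ, ε)` of `S_{n+1} × {±1}` (acting on the hyperplane
`V = {x ∈ ℚ^{n+1} : ∑ xᵢ = 0}`, i.e. on `Aₙ ⊗ ℚ`, by permuting coordinates and by the
global sign `ε`) satisfies `φ² - φ + 1 = 0`. -/
theorem stmt_7 (n : ℕ) (hn : 3 ≤ n) (σ : Equiv.Perm (Fin (n + 1))) (c : ℚ)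
    (hc : c = 1 ∨ c = -1)
    (V : Submodule ℚ (Fin (n + 1) → ℚ))
    (hV : ∀ x : Fin (n + 1) → ℚ, x ∈ V ↔ ∑ i, x i = 0)
    (hmaps : ∀ x ∈ V, (c • LinearMap.funLeft ℚ ℚ σ) x ∈ V) :
    ¬ ((c • LinearMap.funLeft ℚ ℚ σ).restrict hmaps ^ 2 -
        (c • LinearMap.funLeft ℚ ℚ σ).restrict hmaps + 1 = 0) := by
  intro h
  have hmain : ∀ (x : Fin (n+1) → ℚ) (hx : x ∈ V) (k : Fin (n+1)),
      c * (c * x (σ (σ k))) - c * x (σ k) + x k = 0 := by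
    intro x hx k
    have h2 := congrArg (fun g => ((g ⟨x, hx⟩ :
        {y : Fin (n+1) → ℚ // y ∈ V}) : Fin (n+1) → ℚ) k) h
    simpa [pow_two, LinearMap.restrict_apply, LinearMap.funLeft_apply,
      LinearMap.sub_apply, LinearMap.add_apply, Module.End.mul_apply,
      Module.End.one_apply, LinearMap.smul_apply, Pi.smul_apply, smul_eq_mul,
      Submodule.coe_sub, Submodule.coe_add, Pi.sub_apply, Pi.add_apply] using h2
  -- find e outside {0, σ 0, σ (σ 0)}
  have hcard : ({0, σ 0, σ (σ 0)} : Finset (Fin (n+1))).card <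
      Fintype.card (Fin (n+1)) := by
    have h1 : ({0, σ 0, σ (σ 0)} : Finset (Fin (n+1))).card ≤ 3 := by
      apply le_trans (Finset.card_insert_le _ _)
      have := Finset.card_insert_le (σ 0) ({σ (σ 0)} : Finset (Fin (n+1)))
      simp at this ⊢; omega
    rw [Fintype.card_fin]; omega
  have hne : ({0, σ 0, σ (σ 0)} : Finset (Fin (n+1))) ≠ Finset.univ := by
    intro heq; rw [heq] at hcard; simp at hcard
  obtain ⟨e, he⟩ : ∃ e, e ∉ ({0, σ 0, σ (σ 0)} : Finset (Fin (n+1))) := by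
    by_contra h'
    push_neg at h'
    exact hne (Finset.eq_univ_iff_forall.mpr h')
  simp [Finset.mem_insert] at he
  obtain ⟨hea, heb, hed⟩ := he
  -- test vector
  have hxV : (Pi.single (0 : Fin (n+1)) 1 - Pi.single e 1 : Fin (n+1) → ℚ) ∈ V := by
    rw [hV]
    simp [Finset.sum_sub_distrib, Finset.sum_pi_single]
  have E := hmain _ hxV 0
  simp only [Pi.sub_apply, Pi.single_apply] at E
  simp only [if_true, sub_zero, if_neg (Ne.symm hea), if_neg (Ne.symm heb),
    if_neg (Ne.symm hed), sub_zero, zero_sub, add_zero] at E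
  by_cases hba : σ (0 : Fin (n+1)) = 0
  · rw [hba, hba, if_pos rfl] at E
    rcases hc with rfl | rfl <;> norm_num at E
  · rw [if_neg hba] at E
    by_cases hda : σ (σ (0 : Fin (n+1))) = 0
    · rw [if_pos hda] at E
      rcases hc with rfl | rfl <;> norm_num at E
    · rw [if_neg hda] at E
      norm_num at E
end

section
/- If a signed permutation matrix φ (element of S_n ⋉ {±1}^n acting on Q^n) satisfies φ² - φ + 1 = 0, then a contradiction arises; hence for n = 3 and n ≥ 5, Aut(D_n) ≅ S_n ⋉ {±1}^n contains no element with minimal polynomial X² - X + 1. -/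
/-- A signed permutation matrix (an element of `Sₙ ⋉ {±1}ⁿ` acting on `ℚⁿ`, `n ≥ 1`)
cannot satisfy `M² - M + 1 = 0`; hence (in particular for `n = 3` and `n ≥ 5`) the
automorphism group `Sₙ ⋉ {±1}ⁿ` of `Dₙ` contains no element with minimal polynomial
`X² - X + 1`. -/
theorem stmt_8 (n : ℕ) (hn : 1 ≤ n) (M : Matrix (Fin n) (Fin n) ℚ)
    (σ : Equiv.Perm (Fin n)) (ε : Fin n → ℚ) (hε : ∀ i, ε i = 1 ∨ ε i = -1)
    (hM : ∀ i j : Fin n, M i j = if σ j = i then ε j else 0)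
    (heq : M ^ 2 - M + 1 = 0) : False := by
  have key : ∀ i j, (∑ k, M i k * M k j) - M i j + (if i = j then (1:ℚ) else 0) = 0 := by
    intro i j
    have := congrFun (congrFun heq i) j
    simpa [Matrix.sub_apply, Matrix.add_apply, Matrix.one_apply, pow_two,
      Matrix.mul_apply] using this
  have hsum : ∀ i j, (∑ k, M i k * M k j) = M i (σ j) * ε j := by
    intro i j
    rw [Finset.sum_eq_single (σ j)]
    · rw [hM (σ j) j, if_pos rfl]
    · intro k _ hk
      rw [hM k j, if_neg (fun h => hk h.symm), mul_zero]
    · intro h; exact absurd (Finset.mem_univ _) h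
  set j : Fin n := ⟨0, hn⟩ with hj
  by_cases h1 : σ j = j
  · have e := key j j
    rw [hsum j j, hM j (σ j), hM j j] at e
    simp only [h1, if_pos rfl] at e
    rcases hε j with h | h <;> rw [h] at e <;> norm_num at e
  · by_cases h2 : σ (σ j) = j
    · have e := key (σ j) j
      rw [hsum (σ j) j, hM (σ j) (σ j), hM (σ j) j] at e
      have ha : σ (σ j) ≠ σ j := by rw [h2]; exact fun h => h1 h.symm
      simp only [if_neg ha, if_pos rfl, if_neg h1, zero_mul, zero_sub] at e
      rcases hε j with h | h <;> rw [h] at e <;> norm_num at e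
    · have e := key (σ (σ j)) j
      have ha : σ (σ j) ≠ σ j := fun h => h1 (σ.injective h)
      rw [hsum (σ (σ j)) j, hM (σ (σ j)) (σ j), hM (σ (σ j)) j] at e
      simp only [if_pos rfl, if_neg (Ne.symm ha), if_neg h2, sub_zero, add_zero] at e
      rcases hε j with h | h <;> rcases hε (σ j) with h' | h' <;>
        rw [h, h'] at e <;> norm_num at e
end

section
/- The 4×4 Hermitian matrix H = [[2I, C], [-C, 2I]] with C = (2i/√3)·[[1,1],[1,-1]] is positive definite, has determinant (2/(i√3))⁴ = 16/9, and satisfies x̄ᵀHx ∈ 2Z for all x ∈ O⁴, where O = Z[ω], ω = (1+i√3)/2. -/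
open Matrix Complex ComplexOrder

/-- `ω = (1 + i√3)/2`, a primitive sixth root of unity. -/
noncomputable def omegaE : ℂ := (1 + Complex.I * Real.sqrt 3) / 2

/-- Membership in the ring of Eisenstein integers `𝒪 = ℤ + ℤω`. -/
def IsEisensteinInt (z : ℂ) : Prop := ∃ a b : ℤ, z = (a : ℂ) + (b : ℂ) * omegaE

/-!
Write `c = 2i/√3`, so that `c̄ = -c` and `|c|² = 4/3`. The Hermitian form of `H` is
`2 ∑ |xᵢ|² + 2 Re (c x̄₀ (x₂ + x₃)) + 2 Re (c x̄₁ (x₂ - x₃))`; completing the square it equals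
`½|2x₀ + c(x₂ + x₃)|² + ½|2x₁ + c(x₂ - x₃)|² + (2 - |c|²)(|x₂|² + |x₃|²)`,
which is positive definite since `|c|² < 2`. On `𝒪⁴` the norms `|a + bω|² = a² + ab + b²` are
integers, and `Re (c (a + bω)) = -b` because `c (ω - ω̄) = c · i√3 = -2`, so the form is even.
The determinant is `(4 + 2c²)² = (4/3)²`.
-/

open ComplexConjugate

/-- The matrix `[[2I, C], [-C, 2I]]` with `C = c · [[1, 1], [1, -1]]`. -/
def gramMatrix (c : ℂ) : Matrix (Fin 4) (Fin 4) ℂ :=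
  !![2, 0, c, c; 0, 2, c, -c; -c, -c, 2, 0; -c, c, 0, 2]

section gramMatrix

theorem det_gramMatrix (c : ℂ) : (gramMatrix c).det = (4 + 2 * c ^ 2) ^ 2 := by
  simp [gramMatrix, det_succ_row_zero, Fin.sum_univ_succ, Fin.succAbove]
  ring

variable {c : ℂ} (hc : conj c = -c)
include hc

theorem gramMatrix_isHermitian : (gramMatrix c).IsHermitian := by
  ext i j
  fin_cases i <;> fin_cases j <;> simp [gramMatrix, hc]

theorem star_dotProduct_gramMatrix_mulVec (x : Fin 4 → ℂ) :
    star x ⬝ᵥ gramMatrix c *ᵥ x =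
      2 * ∑ i, conj (x i) * x i
        + (c * (conj (x 0) * (x 2 + x 3)) + conj (c * (conj (x 0) * (x 2 + x 3))))
        + (c * (conj (x 1) * (x 2 - x 3)) + conj (c * (conj (x 1) * (x 2 - x 3)))) := by
  simp only [gramMatrix, dotProduct, mulVec, Fin.sum_univ_four, of_apply, cons_val', cons_val_zero,
    cons_val_one, cons_val, cons_val_fin_one, Pi.star_apply, RCLike.star_def, map_add, map_sub,
    map_mul, conj_conj, hc]
  ring

theorem star_dotProduct_gramMatrix_mulVec_eq_normSq (x : Fin 4 → ℂ) :
    star x ⬝ᵥ gramMatrix c *ᵥ x =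
      ((normSq (2 * x 0 + c * (x 2 + x 3)) / 2 + normSq (2 * x 1 + c * (x 2 - x 3)) / 2
        + (2 - normSq c) * (normSq (x 2) + normSq (x 3)) : ℝ) : ℂ) := by
  push_cast [← mul_conj]
  simp only [gramMatrix, dotProduct, mulVec, Fin.sum_univ_four, of_apply, cons_val', cons_val_zero,
    cons_val_one, cons_val, cons_val_fin_one, Pi.star_apply, RCLike.star_def, map_add, map_sub,
    map_mul, map_ofNat, hc]
  ring

theorem gramMatrix_posDef (hc2 : normSq c < 2) : (gramMatrix c).PosDef := by
  refine posDef_iff_dotProduct_mulVec.mpr ⟨gramMatrix_isHermitian hc, fun x hx => ?_⟩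
  rw [star_dotProduct_gramMatrix_mulVec_eq_normSq hc, zero_lt_real]
  contrapose! hx
  have n0 := normSq_nonneg (2 * x 0 + c * (x 2 + x 3))
  have n1 := normSq_nonneg (2 * x 1 + c * (x 2 - x 3))
  have n2 := normSq_nonneg (x 2)
  have n3 := normSq_nonneg (x 3)
  have h2 : x 2 = 0 := normSq_eq_zero.mp (by nlinarith)
  have h3 : x 3 = 0 := normSq_eq_zero.mp (by nlinarith)
  have h0 : 2 * x 0 + c * (x 2 + x 3) = 0 := normSq_eq_zero.mp (by nlinarith)
  have h1 : 2 * x 1 + c * (x 2 - x 3) = 0 := normSq_eq_zero.mp (by nlinarith)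
  simp only [h2, h3, add_zero, sub_zero, mul_zero, mul_eq_zero, two_ne_zero, false_or] at h0 h1
  ext i
  fin_cases i <;> assumption

end gramMatrix

theorem ofReal_sqrt_three_sq : ((√3 : ℝ) : ℂ) ^ 2 = 3 := by
  norm_cast
  simp

theorem conj_two_mul_I_div_sqrt_three : conj (2 * I / √3) = -(2 * I / √3) := by
  simp only [map_div₀, map_mul, map_ofNat, conj_I, conj_ofReal]
  ring

theorem two_mul_I_div_sqrt_three_sq : (2 * I / √3) ^ 2 = -4 / 3 := by
  rw [div_pow, ofReal_sqrt_three_sq, mul_pow, I_sq]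
  ring

theorem normSq_two_mul_I_div_sqrt_three : normSq (2 * I / √3) = 4 / 3 := by
  simp [normSq_mul, normSq_ofReal]
  norm_num

theorem omegaE_sq : omegaE ^ 2 = omegaE - 1 := by
  unfold omegaE
  linear_combination (I ^ 2 / 4) * ofReal_sqrt_three_sq + (3 / 4) * I_sq

theorem conj_omegaE : conj omegaE = 1 - omegaE := by
  simp only [omegaE, map_div₀, map_add, map_one, map_mul, conj_I, conj_ofReal, map_ofNat]
  ring

theorem omegaE_sub_conj : omegaE - conj omegaE = I * √3 := by
  rw [conj_omegaE, omegaE]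
  ring

namespace IsEisensteinInt

variable {z w : ℂ}

theorem star (hz : IsEisensteinInt z) : IsEisensteinInt (star z) := by
  obtain ⟨a, b, rfl⟩ := hz
  refine ⟨a + b, -b, ?_⟩
  simp only [star_add, star_intCast, star_mul', RCLike.star_def, conj_omegaE]
  push_cast
  ring

theorem add (hz : IsEisensteinInt z) (hw : IsEisensteinInt w) : IsEisensteinInt (z + w) := by
  obtain ⟨a, b, rfl⟩ := hz
  obtain ⟨a', b', rfl⟩ := hw
  exact ⟨a + a', b + b', by push_cast; ring⟩

theorem sub (hz : IsEisensteinInt z) (hw : IsEisensteinInt w) : IsEisensteinInt (z - w) := by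
  obtain ⟨a, b, rfl⟩ := hz
  obtain ⟨a', b', rfl⟩ := hw
  exact ⟨a - a', b - b', by push_cast; ring⟩

theorem mul (hz : IsEisensteinInt z) (hw : IsEisensteinInt w) : IsEisensteinInt (z * w) := by
  obtain ⟨a, b, rfl⟩ := hz
  obtain ⟨a', b', rfl⟩ := hw
  refine ⟨a * a' - b * b', a * b' + a' * b + b * b', ?_⟩
  push_cast
  linear_combination (b * b' : ℂ) * omegaE_sq

theorem exists_conj_mul_self_eq (hz : IsEisensteinInt z) : ∃ n : ℤ, conj z * z = n := by
  obtain ⟨a, b, rfl⟩ := hz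
  refine ⟨a ^ 2 + a * b + b ^ 2, ?_⟩
  simp only [map_add, map_intCast, map_mul, conj_omegaE]
  push_cast
  linear_combination (-(b : ℂ) ^ 2) * omegaE_sq

theorem exists_two_mul_I_div_sqrt_three_mul_add_conj_eq (hz : IsEisensteinInt z) :
    ∃ n : ℤ, 2 * I / √3 * z + conj (2 * I / √3 * z) = 2 * n := by
  obtain ⟨a, b, rfl⟩ := hz
  refine ⟨-b, ?_⟩
  have h3 : ((√3 : ℝ) : ℂ) ≠ 0 := by norm_num
  calc 2 * I / √3 * (a + b * omegaE) + conj (2 * I / √3 * (a + b * omegaE))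
      = 2 * I / √3 * b * (omegaE - conj omegaE) := by
        rw [map_mul, conj_two_mul_I_div_sqrt_three, map_add, map_mul, map_intCast, map_intCast]
        ring
    _ = 2 * (-b : ℤ) := by
        rw [omegaE_sub_conj]
        field_simp
        push_cast
        linear_combination (b : ℂ) * I_sq

end IsEisensteinInt

theorem exists_star_dotProduct_gramMatrix_mulVec_eq_two_mul {x : Fin 4 → ℂ}
    (hx : ∀ i, IsEisensteinInt (x i)) :
    ∃ k : ℤ, star x ⬝ᵥ gramMatrix (2 * I / √3) *ᵥ x = 2 * k := by
  choose n hn using fun i => (hx i).exists_conj_mul_self_eq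
  have h₀ : IsEisensteinInt (conj (x 0) * (x 2 + x 3)) := (hx 0).star.mul ((hx 2).add (hx 3))
  have h₁ : IsEisensteinInt (conj (x 1) * (x 2 - x 3)) := (hx 1).star.mul ((hx 2).sub (hx 3))
  obtain ⟨m₀, hm₀⟩ := h₀.exists_two_mul_I_div_sqrt_three_mul_add_conj_eq
  obtain ⟨m₁, hm₁⟩ := h₁.exists_two_mul_I_div_sqrt_three_mul_add_conj_eq
  refine ⟨∑ i, n i + m₀ + m₁, ?_⟩
  rw [star_dotProduct_gramMatrix_mulVec conj_two_mul_I_div_sqrt_three, hm₀, hm₁]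
  simp only [hn]
  push_cast
  ring

/-- The 4×4 Hermitian matrix `H = [[2I, C], [-C, 2I]]` with `C = (2i/√3)·[[1,1],[1,-1]]`
is positive definite, has determinant `(2/(i√3))⁴ = 16/9`, and takes even integer values
`x̄ᵀHx ∈ 2ℤ` on `𝒪⁴`. -/
theorem stmt_11 :
    let c : ℂ := 2 * Complex.I / Real.sqrt 3
    let H : Matrix (Fin 4) (Fin 4) ℂ :=
      !![2, 0, c, c; 0, 2, c, -c; -c, -c, 2, 0; -c, c, 0, 2]
    H.PosDef ∧ H.det = 16 / 9 ∧
      ∀ x : Fin 4 → ℂ, (∀ i, IsEisensteinInt (x i)) →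
        ∃ k : ℤ, star x ⬝ᵥ H.mulVec x = 2 * (k : ℂ) := by
  refine ⟨gramMatrix_posDef conj_two_mul_I_div_sqrt_three ?_, ?_,
    fun x hx => exists_star_dotProduct_gramMatrix_mulVec_eq_two_mul hx⟩
  · rw [normSq_two_mul_I_div_sqrt_three]
    norm_num
  · change (gramMatrix _).det = 16 / 9
    rw [det_gramMatrix, two_mul_I_div_sqrt_three_sq]
    norm_num
end
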